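/- arXiv:2406.12799 — 2 statements merged into one kernel-verified Lean document; each statement's English description precedes it below -/
import Mathlib

section
/- Let M be a matroid on a finite ground set U and let w : U → ℝ be a nonnegative weight function. Suppose A is a basis of M of maximum total weight. Then for every basis B of M there exists a bijection g : B → A such that for every y ∈ B the set (A \ {g(y)}) ∪ {y} is a basis of M and w(g(y)) ≥ w(y). -/
open Classical

/-- A matroid on a finite ground set `α`, given by its independent sets. -/
structure FinMatroid (α : Type*) [DecidableEq α] [Fintype α] where
  /-- The independent sets. -/
  Indep : Finset α → Prop
  indep_empty : Indep ∅
  indep_subset : ∀ ⦃I J : Finset α⦄, Indep J → I ⊆ J → Indep I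
  indep_exchange : ∀ ⦃I J : Finset α⦄, Indep I → Indep J → I.card < J.card →
    ∃ e ∈ J, e ∉ I ∧ Indep (insert e I)

namespace FinMatroid

variable {α : Type*} [DecidableEq α] [Fintype α]

/-- A basis of the matroid: a maximal independent set. -/
def Base (M : FinMatroid α) (B : Finset α) : Prop :=
  M.Indep B ∧ ∀ e : α, e ∉ B → ¬ M.Indep (insert e B)

/-- The rank of a set: the size of a largest independent subset. -/
noncomputable def rank (M : FinMatroid α) (S : Finset α) : ℕ :=
  (S.powerset.filter M.Indep).sup Finset.card

/-- The span of a set: the elements whose insertion does not increase the rank. -/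
noncomputable def span (M : FinMatroid α) (S : Finset α) : Finset α :=
  Finset.univ.filter fun e => M.rank (insert e S) = M.rank S

end FinMatroid

/-! For `y ∈ B` let `N y ⊆ A` be the set of `x` with `A - x + y` a basis. The fundamental circuit
of `y` in `A` puts `y` in the closure of `N y`, so every `S ⊆ B` is an independent subset of the
closure of `N S` and hence `|S| ≤ |N S|`. Hall's theorem then gives an injection `g : B → A` with
`g y ∈ N y`, which is a bijection because `|A| = |B|`; comparing `w A` with the weight of the
basis `A - g y + y` gives `w y ≤ w (g y)`. -/

namespace Matroid

variable {α : Type*} {M : Matroid α} {A I X : Set α} {y : α}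

lemma Indep.encard_le_encard_of_subset_closure (hI : M.Indep I) (hIX : I ⊆ M.closure X) :
    I.encard ≤ X.encard :=
  calc I.encard = M.eRk I := hI.eRk_eq_encard.symm
    _ ≤ M.eRk (M.closure X) := M.eRk_mono hIX
    _ = M.eRk X := M.eRk_closure_eq X
    _ ≤ X.encard := M.eRk_le_encard X

/-- Every `x ≠ y` on the fundamental circuit of `y` in `A` can be exchanged for `y`, and `y` is
spanned by the rest of its fundamental circuit. -/
lemma IsBase.mem_closure_setOf_isBase_exchange (hA : M.IsBase A) (hy : y ∈ M.E) :
    y ∈ M.closure {x ∈ A | M.IsBase (insert y (A \ {x}))} := by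
  by_cases hyA : y ∈ A
  · exact M.mem_closure_of_mem' ⟨hyA, by simpa [hyA] using hA⟩
  have hC := hA.fundCircuit_isCircuit hy hyA
  refine M.closure_subset_closure ?_ (hC.mem_closure_sdiff_singleton_of_mem (M.mem_fundCircuit y A))
  rintro x ⟨hxC, hxy : x ≠ y⟩
  have hxA : x ∈ A := (M.fundCircuit_subset_insert y A hxC).resolve_left hxy
  have hindep := (hA.indep.mem_fundCircuit_iff (by rw [hA.closure_eq]; exact hy) hyA).1 hxC
  rw [← Set.insert_sdiff_singleton_comm (Ne.symm hxy)] at hindep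
  exact ⟨hxA, hA.exchange_isBase_of_indep hyA hindep⟩

end Matroid

namespace FinMatroid

variable {α : Type*} [DecidableEq α] [Fintype α] (M : FinMatroid α)

noncomputable def toMatroid : Matroid α :=
  (IndepMatroid.ofFinset Set.univ M.Indep M.indep_empty M.indep_subset M.indep_exchange
    fun _ _ => Set.subset_univ _).matroid

@[simp] lemma toMatroid_indep_coe {I : Finset α} : M.toMatroid.Indep I ↔ M.Indep I := by
  simp [toMatroid]

@[simp] lemma toMatroid_isBase_coe {B : Finset α} : M.toMatroid.IsBase B ↔ M.Base B := by
  refine ⟨fun hB => ⟨by simpa using hB.indep, fun e he hi => ?_⟩, fun hB => ?_⟩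
  · refine (hB.insert_dep ⟨trivial, he⟩).not_indep ?_
    rwa [← Finset.coe_insert, toMatroid_indep_coe]
  · refine (M.toMatroid_indep_coe.2 hB.1).isBase_of_forall_insert fun e he => ?_
    rw [← Finset.coe_insert, toMatroid_indep_coe]
    exact hB.2 e (by simpa using he.2)

noncomputable def exchangeable (A : Finset α) (y : α) : Finset α :=
  A.filter fun x => M.Base (insert y (A.erase x))

lemma coe_exchangeable (A : Finset α) (y : α) :
    (M.exchangeable A y : Set α) =
      {x ∈ (A : Set α) | M.toMatroid.IsBase (insert y (↑A \ {x}))} := by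
  ext x
  simp [exchangeable, ← Finset.coe_erase, ← Finset.coe_insert]

variable {M} {A B I : Finset α}

lemma Base.card_eq (hA : M.Base A) (hB : M.Base B) : A.card = B.card := by
  simpa using (M.toMatroid_isBase_coe.2 hA).ncard_eq_ncard_of_isBase (M.toMatroid_isBase_coe.2 hB)

lemma Base.card_le_card_biUnion_exchangeable (hA : M.Base A) (hI : M.Indep I) :
    I.card ≤ (I.biUnion (M.exchangeable A)).card := by
  have hspan : (I : Set α) ⊆ M.toMatroid.closure (I.biUnion (M.exchangeable A)) := by
    intro y hy
    refine M.toMatroid.closure_subset_closure ?_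
      ((M.toMatroid_isBase_coe.2 hA).mem_closure_setOf_isBase_exchange (y := y) trivial)
    rw [← coe_exchangeable]
    exact Finset.coe_subset.2 (Finset.subset_biUnion_of_mem _ hy)
  exact_mod_cast (M.toMatroid_indep_coe.2 hI).encard_le_encard_of_subset_closure hspan

theorem Base.exists_equiv_base_exchange (hA : M.Base A) (hB : M.Base B) :
    ∃ g : B ≃ A, ∀ y : B, M.Base (insert (y : α) (A.erase (g y))) := by
  obtain ⟨f, hf_inj, hf⟩ := (Finset.all_card_le_biUnion_card_iff_exists_injective
    fun y : B => M.exchangeable A y).1 fun s => by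
      convert hA.card_le_card_biUnion_exchangeable
        (M.indep_subset hB.1 (Finset.map_subtype_subset s)) using 2
      · simp
      · ext x; simp
  have hf_mem : ∀ y, f y ∈ A := fun y => (Finset.mem_filter.1 (hf y)).1
  let g : B → A := fun y => ⟨f y, hf_mem y⟩
  have hg_bij : Function.Bijective g := by
    refine (Fintype.bijective_iff_injective_and_card g).2
      ⟨fun y z h => hf_inj (congrArg Subtype.val h), ?_⟩
    simp [hB.card_eq hA]
  exact ⟨Equiv.ofBijective g hg_bij, fun y => (Finset.mem_filter.1 (hf y)).2⟩

lemma Base.weight_le_of_base_exchange {w : α → ℝ} {x y : α} (hA : M.Base A)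
    (hAmax : ∀ B' : Finset α, M.Base B' → ∑ e ∈ B', w e ≤ ∑ e ∈ A, w e) (hx : x ∈ A)
    (hxy : M.Base (insert y (A.erase x))) : w y ≤ w x := by
  have hyA : y ∉ A.erase x := by
    intro hy
    have hcard := hxy.card_eq hA
    rw [Finset.insert_eq_of_mem hy, Finset.card_erase_of_mem hx] at hcard
    have hpos := Finset.card_pos.2 ⟨x, hx⟩
    omega
  have hsum := hAmax _ hxy
  rw [Finset.sum_insert hyA, Finset.sum_erase_eq_sub hx] at hsum
  linarith

end FinMatroid

theorem stmt_1_general {α : Type*} [DecidableEq α] [Fintype α] (M : FinMatroid α)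
    (w : α → ℝ)
    (A : Finset α) (hA : M.Base A)
    (hAmax : ∀ B' : Finset α, M.Base B' → ∑ e ∈ B', w e ≤ ∑ e ∈ A, w e)
    (B : Finset α) (hB : M.Base B) :
    ∃ g : B ≃ A,
      ∀ y : B, M.Base (insert (y : α) (A.erase ((g y : α)))) ∧ w y ≤ w (g y) := by
  obtain ⟨g, hg⟩ := hA.exists_equiv_base_exchange hB
  exact ⟨g, fun y => ⟨hg y, hA.weight_le_of_base_exchange hAmax (g y).2 (hg y)⟩⟩

/-- Lemma 1 of KW12: if `A` is a maximum-weight basis and `B` is any basis, there is a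
bijection `g : B → A` with `A - g(y) + y` a basis and `w (g y) ≥ w y` for all `y ∈ B`. -/
theorem stmt_1 {α : Type*} [DecidableEq α] [Fintype α] (M : FinMatroid α)
    (w : α → ℝ) (hw : ∀ e : α, 0 ≤ w e)
    (A : Finset α) (hA : M.Base A)
    (hAmax : ∀ B' : Finset α, M.Base B' → ∑ e ∈ B', w e ≤ ∑ e ∈ A, w e)
    (B : Finset α) (hB : M.Base B) :
    ∃ g : B ≃ A,
      ∀ y : B, M.Base (insert (y : α) (A.erase ((g y : α)))) ∧ w y ≤ w (g y) :=
  stmt_1_general M w A hA hAmax B hB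
end

section
/- Let M be a matroid on a finite ground set U, let N ⊆ U with rank(N) ≥ 1, let b > 0 and c > 0 be reals, and let x : U → [0,1] satisfy Σ_{e∈S} x(e) ≤ b · rank(S) for every S ⊆ U (that is, x ∈ b · P_M). Let μ be a probability measure on the powerset of U such that μ{ R ⊆ U : e ∈ R } = x(e) for every e ∈ N. For T ⊆ N and e ∈ U define P(T, e) = μ{ R ⊆ U : e ∈ span(((R ∩ N) ∪ T) \ {e}) }. Suppose S ⊆ N satisfies P(S, e) ≤ c for every e ∈ N \ S, and moreover S ⊆ T for every T ⊆ N satisfying P(T, e) ≤ c for every e ∈ N \ T (that is, S is the minimum such set). Then rank(S) < (b / c) · rank(N). -/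
open Classical

/-!
With `G(T) = 𝔼 rank((R ∩ N) ∪ T)`, adding to `T` an element `e` with `P(T, e) > c` raises `G`
by at most `1 - P(T, e)`, and only if it raises `rank T` by one; hence the potential
`G(T) - (1 - c) rank T` does not increase. Since `P` takes finitely many values, `c` may be
replaced by some `c' > c` below every value of `P` exceeding `c`. Growing a subset of `S` greedily
in this way reaches a set that is stable, hence equal to `S` by minimality, so
`c' rank S ≤ G(S) - (1 - c') rank S ≤ G(∅) ≤ 𝔼 |R ∩ N| = x(N) ≤ b rank N`.
-/

namespace FinMatroid

variable {α : Type*} [DecidableEq α] [Fintype α] {M : FinMatroid α} {I A B S : Finset α} {e : α}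

lemma card_le_rank (hI : M.Indep I) (hIS : I ⊆ S) : I.card ≤ M.rank S :=
  Finset.le_sup (Finset.mem_filter.mpr ⟨Finset.mem_powerset.mpr hIS, hI⟩)

lemma exists_indep_card_eq_rank (M : FinMatroid α) (S : Finset α) :
    ∃ I ⊆ S, M.Indep I ∧ I.card = M.rank S := by
  obtain ⟨I, hI, hsup⟩ := Finset.exists_mem_eq_sup (S.powerset.filter M.Indep)
    ⟨∅, Finset.mem_filter.mpr ⟨Finset.empty_mem_powerset S, M.indep_empty⟩⟩ Finset.card
  rw [Finset.mem_filter, Finset.mem_powerset] at hI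
  exact ⟨I, hI.1, hI.2, hsup.symm⟩

lemma rank_mono (h : A ⊆ B) : M.rank A ≤ M.rank B :=
  Finset.sup_le fun I hI => by
    rw [Finset.mem_filter, Finset.mem_powerset] at hI
    exact card_le_rank hI.2 (hI.1.trans h)

lemma rank_le_card (M : FinMatroid α) (S : Finset α) : M.rank S ≤ S.card :=
  Finset.sup_le fun _ hI =>
    Finset.card_le_card (Finset.mem_powerset.mp (Finset.mem_filter.mp hI).1)

@[simp]
lemma rank_empty (M : FinMatroid α) : M.rank ∅ = 0 :=
  Nat.eq_zero_of_le_zero (M.rank_le_card ∅)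

lemma rank_insert_le (M : FinMatroid α) (S : Finset α) (e : α) :
    M.rank (insert e S) ≤ M.rank S + 1 :=
  Finset.sup_le fun I hI => by
    rw [Finset.mem_filter, Finset.mem_powerset] at hI
    have hIe : I.erase e ⊆ S := fun a ha =>
      (Finset.mem_insert.mp (hI.1 (Finset.mem_of_mem_erase ha))).resolve_left
        (Finset.ne_of_mem_erase ha)
    have := card_le_rank (M.indep_subset hI.2 (Finset.erase_subset e I)) hIe
    have := Finset.pred_card_le_card_erase (s := I) (a := e)
    omega

lemma exists_indep_superset_card_eq_rank (hI : M.Indep I) (hIS : I ⊆ S) :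
    ∃ J, I ⊆ J ∧ J ⊆ S ∧ M.Indep J ∧ J.card = M.rank S := by
  induction h : M.rank S - I.card generalizing I with
  | zero => exact ⟨I, le_rfl, hIS, hI, by have := card_le_rank hI hIS; omega⟩
  | succ n ih =>
    obtain ⟨B, hBS, hB, hBcard⟩ := M.exists_indep_card_eq_rank S
    obtain ⟨f, hfB, hfI, hfI'⟩ := M.indep_exchange hI hB (by omega)
    obtain ⟨J, hIJ, hJS, hJ, hJcard⟩ := ih hfI' (Finset.insert_subset (hBS hfB) hIS)
      (by rw [Finset.card_insert_of_notMem hfI]; omega)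
    exact ⟨J, (Finset.subset_insert f I).trans hIJ, hJS, hJ, hJcard⟩

lemma rank_insert_eq_of_subset (hAB : A ⊆ B) (h : M.rank (insert e A) = M.rank A) :
    M.rank (insert e B) = M.rank B := by
  refine le_antisymm (not_lt.mp fun hlt => ?_) (rank_mono (Finset.subset_insert e B))
  obtain ⟨I, hIA, hI, hIcard⟩ := M.exists_indep_card_eq_rank A
  obtain ⟨J, hIJ, hJB, hJ, hJcard⟩ := exists_indep_superset_card_eq_rank hI (hIA.trans hAB)
  obtain ⟨K, hK, hKind, hKcard⟩ := M.exists_indep_card_eq_rank (insert e B)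
  obtain ⟨f, hfK, hfJ, hfJ'⟩ := M.indep_exchange hJ hKind (by omega)
  rcases Finset.mem_insert.mp (hK hfK) with rfl | hfB
  · -- `I + f` is independent inside `insert f A`, against `rank (insert f A) = rank A = |I|`
    have := card_le_rank (M.indep_subset hfJ' (Finset.insert_subset_insert f hIJ))
      (Finset.insert_subset_insert f hIA)
    rw [Finset.card_insert_of_notMem fun hf => hfJ (hIJ hf), hIcard, h] at this
    omega
  · have := card_le_rank hfJ' (Finset.insert_subset hfB hJB)
    rw [Finset.card_insert_of_notMem hfJ, hJcard] at this
    omega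

lemma mem_span_iff : e ∈ M.span S ↔ M.rank (insert e S) = M.rank S := by
  simp [span]

lemma span_mono (hAB : A ⊆ B) : M.span A ⊆ M.span B := fun _ he =>
  mem_span_iff.mpr (rank_insert_eq_of_subset hAB (mem_span_iff.mp he))

lemma rank_insert_eq_of_mem_span_erase (h : e ∈ M.span (S.erase e)) :
    M.rank (insert e S) = M.rank S :=
  rank_insert_eq_of_subset (Finset.erase_subset e S) (mem_span_iff.mp h)

lemma rank_insert_eq_add_one_of_notMem_span (h : e ∉ M.span S) :
    M.rank (insert e S) = M.rank S + 1 := by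
  have := M.rank_insert_le S e
  have := rank_mono (M := M) (Finset.subset_insert e S)
  have := mt mem_span_iff.mpr h
  omega

end FinMatroid

lemma exists_gt_forall_lt_imp_le {β : Type*} [Fintype β] (f : β → ℝ) (c : ℝ) :
    ∃ c' > c, ∀ y, c < f y → c' ≤ f y := by
  by_cases h : ∃ y, c < f y
  · obtain ⟨y₀, hy₀, hmin⟩ := Finset.exists_min_image (Finset.univ.filter fun y => c < f y) f
      (h.elim fun y hy => ⟨y, Finset.mem_filter.mpr ⟨Finset.mem_univ y, hy⟩⟩)
    exact ⟨f y₀, (Finset.mem_filter.mp hy₀).2,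
      fun y hy => hmin y (Finset.mem_filter.mpr ⟨Finset.mem_univ y, hy⟩)⟩
  · exact ⟨c + 1, by linarith, fun y hy => absurd ⟨y, hy⟩ h⟩

section SpanProbability

variable {α : Type*} [DecidableEq α] [Fintype α] (M : FinMatroid α) (N : Finset α)
  (μ : Finset α → ℝ)

/-- `P(T, e)` -/
noncomputable def spanProb (T : Finset α) (e : α) : ℝ :=
  ∑ R : Finset α, if e ∈ M.span (((R ∩ N) ∪ T).erase e) then μ R else 0

def IsStable (c : ℝ) (T : Finset α) : Prop :=
  ∀ e ∈ N \ T, spanProb M N μ T e ≤ c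

noncomputable def expectedRank (T : Finset α) : ℝ :=
  ∑ R : Finset α, μ R * (M.rank ((R ∩ N) ∪ T) : ℝ)

noncomputable def potential (c : ℝ) (T : Finset α) : ℝ :=
  expectedRank M N μ T - (1 - c) * M.rank T

variable {M N μ} {T T' : Finset α} {c : ℝ} {e : α}

lemma spanProb_mono (hμ0 : ∀ R, 0 ≤ μ R) (h : T ⊆ T') :
    spanProb M N μ T e ≤ spanProb M N μ T' e := by
  refine Finset.sum_le_sum fun R _ => ?_
  have hspan := FinMatroid.span_mono (M := M)
    (Finset.erase_subset_erase e (Finset.union_subset_union_right (s := R ∩ N) h))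
  split_ifs with h₁ h₂ <;> first | exact le_rfl | exact hμ0 R | exact absurd (hspan h₁) h₂

lemma rank_le_expectedRank (hμ0 : ∀ R, 0 ≤ μ R) (hμ1 : ∑ R, μ R = 1) :
    (M.rank T : ℝ) ≤ expectedRank M N μ T := by
  calc (M.rank T : ℝ) = ∑ R, μ R * M.rank T := by rw [← Finset.sum_mul, hμ1, one_mul]
    _ ≤ expectedRank M N μ T := Finset.sum_le_sum fun R _ =>
        mul_le_mul_of_nonneg_left
          (by exact_mod_cast FinMatroid.rank_mono Finset.subset_union_right) (hμ0 R)

lemma expectedRank_empty_le (hμ0 : ∀ R, 0 ≤ μ R) :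
    expectedRank M N μ ∅ ≤ ∑ e ∈ N, ∑ R, if e ∈ R then μ R else 0 := by
  calc expectedRank M N μ ∅ ≤ ∑ R, μ R * ((R ∩ N).card : ℝ) := Finset.sum_le_sum fun R _ => by
        rw [Finset.union_empty]
        exact mul_le_mul_of_nonneg_left (by exact_mod_cast M.rank_le_card _) (hμ0 R)
    _ = ∑ e ∈ N, ∑ R, if e ∈ R then μ R else 0 := by
        rw [Finset.sum_comm]
        refine Finset.sum_congr rfl fun R _ => ?_
        rw [Finset.sum_ite, Finset.sum_const_zero, add_zero, Finset.sum_const, nsmul_eq_mul,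
          Finset.filter_mem_eq_inter, Finset.inter_comm, mul_comm]

lemma expectedRank_insert_of_mem_span (h : e ∈ M.span T) :
    expectedRank M N μ (insert e T) = expectedRank M N μ T :=
  Finset.sum_congr rfl fun R _ => by
    rw [Finset.union_insert, FinMatroid.rank_insert_eq_of_subset Finset.subset_union_right
      (FinMatroid.mem_span_iff.mp h)]

lemma expectedRank_insert_le (hμ0 : ∀ R, 0 ≤ μ R) (hμ1 : ∑ R, μ R = 1) :
    expectedRank M N μ (insert e T) ≤ expectedRank M N μ T + (1 - spanProb M N μ T e) := by
  have hpt : ∀ R, μ R * (M.rank ((R ∩ N) ∪ insert e T) : ℝ) ≤ μ R * M.rank ((R ∩ N) ∪ T) +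
      (μ R - if e ∈ M.span (((R ∩ N) ∪ T).erase e) then μ R else 0) := fun R => by
    rw [Finset.union_insert]
    split_ifs with h
    · rw [FinMatroid.rank_insert_eq_of_mem_span_erase h]
      linarith
    · have : (M.rank (insert e ((R ∩ N) ∪ T)) : ℝ) ≤ M.rank ((R ∩ N) ∪ T) + 1 := by
        exact_mod_cast M.rank_insert_le _ e
      nlinarith [hμ0 R]
  calc expectedRank M N μ (insert e T) ≤ _ := Finset.sum_le_sum fun R _ => hpt R
    _ = expectedRank M N μ T + (1 - spanProb M N μ T e) := by
      rw [Finset.sum_add_distrib, Finset.sum_sub_distrib, hμ1]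
      rfl

lemma potential_insert_le (hμ0 : ∀ R, 0 ≤ μ R) (hμ1 : ∑ R, μ R = 1)
    (he : c ≤ spanProb M N μ T e) :
    potential M N μ c (insert e T) ≤ potential M N μ c T := by
  unfold potential
  by_cases hspan : e ∈ M.span T
  · rw [expectedRank_insert_of_mem_span hspan, FinMatroid.mem_span_iff.mp hspan]
  · rw [FinMatroid.rank_insert_eq_add_one_of_notMem_span hspan]
    push_cast
    linarith [expectedRank_insert_le (M := M) (N := N) (T := T) (e := e) hμ0 hμ1]

lemma mul_rank_le_potential (hμ0 : ∀ R, 0 ≤ μ R) (hμ1 : ∑ R, μ R = 1) :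
    c * M.rank T ≤ potential M N μ c T := by
  unfold potential
  linarith [rank_le_expectedRank (M := M) (N := N) (T := T) hμ0 hμ1]

lemma potential_empty : potential M N μ c ∅ = expectedRank M N μ ∅ := by
  simp [potential]

/-- A largest subset of `N ∩ S` not raising the potential at threshold `c'` is `c`-stable. -/
lemma exists_isStable_subset_potential_le (hμ0 : ∀ R, 0 ≤ μ R) (hμ1 : ∑ R, μ R = 1)
    {S : Finset α} (hS : IsStable M N μ c S) {c' : ℝ}
    (hgap : ∀ T e, c < spanProb M N μ T e → c' ≤ spanProb M N μ T e) :
    ∃ T ⊆ N ∩ S, IsStable M N μ c T ∧ potential M N μ c' T ≤ potential M N μ c' ∅ := by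
  obtain ⟨T, hT, hmax⟩ := Finset.exists_max_image
    ((N ∩ S).powerset.filter fun T => potential M N μ c' T ≤ potential M N μ c' ∅) Finset.card
    ⟨∅, Finset.mem_filter.mpr ⟨Finset.empty_mem_powerset _, le_rfl⟩⟩
  rw [Finset.mem_filter, Finset.mem_powerset] at hT
  refine ⟨T, hT.1, fun e he => not_lt.mp fun hlt => ?_, hT.2⟩
  obtain ⟨heN, heT⟩ := Finset.mem_sdiff.mp he
  have heS : e ∈ S := by_contra fun heS =>
    (hS e (Finset.mem_sdiff.mpr ⟨heN, heS⟩)).not_gt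
      (hlt.trans_le (spanProb_mono hμ0 (hT.1.trans Finset.inter_subset_right)))
  have := hmax (insert e T) (Finset.mem_filter.mpr
    ⟨Finset.mem_powerset.mpr (Finset.insert_subset (Finset.mem_inter.mpr ⟨heN, heS⟩) hT.1),
      (potential_insert_le hμ0 hμ1 (hgap T e hlt)).trans hT.2⟩)
  rw [Finset.card_insert_of_notMem heT] at this
  omega

end SpanProbability

theorem stmt_6_general {α : Type*} [DecidableEq α] [Fintype α] (M : FinMatroid α)
    (N : Finset α) (hN : 1 ≤ M.rank N)
    (b c : ℝ) (hb : 0 < b) (hc : 0 < c)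
    (x : α → ℝ)
    (hxP : ∀ S : Finset α, ∑ e ∈ S, x e ≤ b * (M.rank S : ℝ))
    (μ : Finset α → ℝ) (hμ0 : ∀ R : Finset α, 0 ≤ μ R) (hμ1 : ∑ R : Finset α, μ R = 1)
    (hmarg : ∀ e ∈ N, (∑ R : Finset α, if e ∈ R then μ R else 0) = x e)
    (S : Finset α)
    (hS : ∀ e ∈ N \ S,
      (∑ R : Finset α, if e ∈ M.span (((R ∩ N) ∪ S).erase e) then μ R else 0) ≤ c)
    (hSmin : ∀ T : Finset α, T ⊆ N →
      (∀ e ∈ N \ T,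
        (∑ R : Finset α, if e ∈ M.span (((R ∩ N) ∪ T).erase e) then μ R else 0) ≤ c) →
      S ⊆ T) :
    (M.rank S : ℝ) < (b / c) * (M.rank N : ℝ) := by
  obtain ⟨c', hcc', hgap⟩ :=
    exists_gt_forall_lt_imp_le (fun p : Finset α × α => spanProb M N μ p.1 p.2) c
  obtain ⟨T, hTNS, hTstable, hTpot⟩ :=
    exists_isStable_subset_potential_le hμ0 hμ1 hS fun T e => hgap (T, e)
  obtain rfl : S = T := (hSmin T (hTNS.trans Finset.inter_subset_left) hTstable).antisymm
    (hTNS.trans Finset.inter_subset_right)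
  have hrank : c' * M.rank S ≤ b * M.rank N :=
    calc c' * M.rank S ≤ potential M N μ c' S := mul_rank_le_potential hμ0 hμ1
      _ ≤ expectedRank M N μ ∅ := hTpot.trans_eq potential_empty
      _ ≤ ∑ e ∈ N, ∑ R, if e ∈ R then μ R else 0 := expectedRank_empty_le hμ0
      _ = ∑ e ∈ N, x e := Finset.sum_congr rfl hmarg
      _ ≤ b * M.rank N := hxP N
  rw [div_mul_eq_mul_div, lt_div_iff₀ hc]
  rcases (M.rank S).eq_zero_or_pos with h0 | hpos
  · rw [h0, Nat.cast_zero, zero_mul]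
    exact mul_pos hb (by exact_mod_cast hN)
  · nlinarith [(Nat.cast_pos (α := ℝ)).mpr hpos]

/-- Lemma (FSZ16, Section 2.1.1): if `x ∈ b·P_M`, `μ` has marginals `x` on `N`, and `S` is
the minimum subset of `N` with `P(S, e) ≤ c` for all `e ∈ N \ S`, then
`rank S < (b / c) · rank N`. -/
theorem stmt_6 {α : Type*} [DecidableEq α] [Fintype α] (M : FinMatroid α)
    (N : Finset α) (hN : 1 ≤ M.rank N)
    (b c : ℝ) (hb : 0 < b) (hc : 0 < c)
    (x : α → ℝ) (hx0 : ∀ e : α, 0 ≤ x e) (hx1 : ∀ e : α, x e ≤ 1)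
    (hxP : ∀ S : Finset α, ∑ e ∈ S, x e ≤ b * (M.rank S : ℝ))
    (μ : Finset α → ℝ) (hμ0 : ∀ R : Finset α, 0 ≤ μ R) (hμ1 : ∑ R : Finset α, μ R = 1)
    (hmarg : ∀ e ∈ N, (∑ R : Finset α, if e ∈ R then μ R else 0) = x e)
    (S : Finset α) (hSN : S ⊆ N)
    (hS : ∀ e ∈ N \ S,
      (∑ R : Finset α, if e ∈ M.span (((R ∩ N) ∪ S).erase e) then μ R else 0) ≤ c)
    (hSmin : ∀ T : Finset α, T ⊆ N →
      (∀ e ∈ N \ T,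
        (∑ R : Finset α, if e ∈ M.span (((R ∩ N) ∪ T).erase e) then μ R else 0) ≤ c) →
      S ⊆ T) :
    (M.rank S : ℝ) < (b / c) * (M.rank N : ℝ) :=
  stmt_6_general M N hN b c hb hc x hxP μ hμ0 hμ1 hmarg S hS hSmin
end
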